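/- arXiv:0905.1092 — 4 statements merged into one kernel-verified Lean document; each statement's English description precedes it below -/
import Mathlib

section
/- The radius of the circle passing through the three points γ(τ_{n-1}), γ(τ_n), γ(τ_{n+1}), where γ(τ_m) = N^{-1/2} S(α, m) and S(α, m) = ∑_{j=0}^{m-1} exp(πi j² α), equals (2√N)^{-1} |csc(π α (2n-1)/2)|, provided the three points are not collinear. -/
/-!
The chords `γ(k+1) - γ(k) = N^{-1/2} e^{π i α k²}` all have length `N^{-1/2}`, and since
`(k+1)² - k² = 2k+1` the next chord is this one turned by the angle `π α (2k+1)`. So the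
three points form an isosceles triangle with turning angle `2t`, `t = π α (2n-1)/2`. The
similarity sending the first chord to `[0, 1]` sends the triangle to `0, 1, 1 + e^{2it}`, whose
circumcentre `q` has `Re q = 1/2` and `cos t = 2 (Im q) sin t`; hence `|q| = 1/(2 |sin t|)`.
-/

open Complex

theorem radius_eq_of_equidistant_unit_turn {q : ℂ} {t : ℝ} (hcos : Real.cos t ≠ 0)
    (h₁ : dist 1 q = dist 0 q) (h₂ : dist (1 + exp (2 * t * I)) q = dist 0 q) :
    dist 0 q = (2 * |Real.sin t|)⁻¹ := by
  have hsq : ∀ z : ℂ, dist z q ^ 2 = (z.re - q.re) ^ 2 + (z.im - q.im) ^ 2 := fun z => by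
    rw [dist_eq, Complex.sq_norm, normSq_apply]; simp only [sub_re, sub_im]; ring
  have e₁ := congrArg (· ^ 2) h₁
  have e₂ := congrArg (· ^ 2) h₂
  simp only [hsq, one_re, one_im, zero_re, zero_im, add_re, add_im, exp_re, exp_im, mul_re, mul_im,
    I_re, I_im, ofReal_re, ofReal_im] at e₁ e₂
  norm_num [Real.cos_two_mul, Real.sin_two_mul] at e₂
  have pyth := Real.sin_sq_add_cos_sq t
  have hre : q.re = 1 / 2 := by linear_combination (-1 / 2) * e₁
  have him : Real.cos t = 2 * q.im * Real.sin t :=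
    mul_left_cancel₀ hcos (by
      linear_combination (1 / 2) * e₂ - 2 * Real.cos t ^ 2 * pyth + 2 * Real.cos t ^ 2 * hre)
  have hunit : (dist 0 q * (2 * |Real.sin t|)) ^ 2 = 1 := by
    rw [mul_pow, hsq, mul_pow, sq_abs]
    simp only [zero_re, zero_im]
    linear_combination 4 * Real.sin t ^ 2 * (q.re + 1 / 2) * hre
      - (Real.cos t + 2 * q.im * Real.sin t) * him + pyth
  exact eq_inv_of_mul_eq_one_left ((pow_eq_one_iff_of_nonneg (by positivity) two_ne_zero).1 hunit)

theorem radius_eq_of_equidistant_turn {a b d c : ℂ} {r t : ℝ}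
    (hturn : d - b = (b - a) * exp (2 * t * I)) (hcol : ¬Collinear ℝ ({a, b, d} : Set ℂ))
    (ha : dist a c = r) (hb : dist b c = r) (hd : dist d c = r) :
    r = ‖b - a‖ / (2 * |Real.sin t|) := by
  have hab : b - a ≠ 0 := by
    intro h
    rw [sub_eq_zero.mp h, Set.insert_idem] at hcol
    exact hcol (collinear_pair ℝ a d)
  have hcos : Real.cos t ≠ 0 := by
    intro h
    have hexp : exp (2 * t * I) = -1 := by
      rw [show (2 * t * I : ℂ) = ((2 * t : ℝ) : ℂ) * I by push_cast; ring, exp_mul_I,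
        ← ofReal_cos, ← ofReal_sin, Real.cos_two_mul, Real.sin_two_mul, h]
      norm_num
    have hda : d = a := by linear_combination hturn + (b - a) * hexp
    rw [hda, Set.insert_eq_of_mem (by simp)] at hcol
    exact hcol (collinear_pair ℝ b a)
  obtain ⟨q, rfl⟩ : ∃ q, c = a + (b - a) * q := ⟨(c - a) / (b - a), by field_simp; ring⟩
  have hdist : ∀ e : ℂ, dist (a + (b - a) * e) (a + (b - a) * q) = ‖b - a‖ * dist e q := by
    intro e
    rw [dist_add_left, dist_eq_norm, dist_eq_norm, ← mul_sub, norm_mul]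
  have h₀ : r = ‖b - a‖ * dist 0 q := by rw [← hdist, mul_zero, add_zero, ha]
  have h₁ : r = ‖b - a‖ * dist 1 q := by rw [← hdist, mul_one, add_sub_cancel, hb]
  have h₂ : r = ‖b - a‖ * dist (1 + exp (2 * t * I)) q := by
    rw [← hdist, ← hd]; congr 1; linear_combination hturn
  have hba : ‖b - a‖ ≠ 0 := norm_ne_zero_iff.mpr hab
  rw [h₀, radius_eq_of_equidistant_unit_turn hcos, div_eq_mul_inv]
  · exact mul_left_cancel₀ hba (h₁.symm.trans h₀)
  · exact mul_left_cancel₀ hba (h₂.symm.trans h₀)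

theorem discrete_radius_of_curvature_general (α : ℝ) (N n : ℕ)
    (hn : 1 ≤ n)
    (γ : ℕ → ℂ)
    (hγ : ∀ m : ℕ, γ m = (Real.sqrt N)⁻¹ •
      ∑ j ∈ Finset.range m, Complex.exp (Real.pi * Complex.I * (j : ℂ) ^ 2 * (α : ℂ)))
    (c : ℂ) (r : ℝ)
    (h₀ : dist (γ (n - 1)) c = r) (h₁ : dist (γ n) c = r) (h₂ : dist (γ (n + 1)) c = r)
    (hcol : ¬ Collinear ℝ ({γ (n - 1), γ n, γ (n + 1)} : Set ℂ)) :
    r = (2 * Real.sqrt N)⁻¹ * |1 / Real.sin (Real.pi * α * (2 * (n : ℝ) - 1) / 2)| := by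
  have hstep : ∀ k : ℕ, γ (k + 1) - γ k =
      (Real.sqrt N)⁻¹ • exp ((Real.pi * k ^ 2 * α : ℝ) * I) := fun k => by
    rw [hγ, hγ, Finset.sum_range_succ, smul_add, add_sub_cancel_left]
    congr 2
    push_cast
    ring
  obtain ⟨m, rfl⟩ : ∃ m, n = m + 1 := ⟨n - 1, by omega⟩
  set t := Real.pi * α * (2 * ((m + 1 : ℕ) : ℝ) - 1) / 2
  have hturn : γ (m + 1 + 1) - γ (m + 1) = (γ (m + 1) - γ m) * exp (2 * t * I) := by
    rw [hstep, hstep, smul_mul_assoc, ← Complex.exp_add]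
    congr 2
    push_cast [t]
    ring
  have hchord : ‖γ (m + 1) - γ m‖ = (Real.sqrt N)⁻¹ := by
    rw [hstep, norm_smul, norm_exp_ofReal_mul_I, mul_one, norm_inv,
      Real.norm_of_nonneg (Real.sqrt_nonneg _)]
  rw [Nat.add_sub_cancel] at h₀ hcol
  rw [radius_eq_of_equidistant_turn hturn hcol h₀ h₁ h₂, hchord, abs_div, abs_one]
  field_simp

/-- The radius of the circle through the three consecutive points
`γ(τ_{n-1}), γ(τ_n), γ(τ_{n+1})` of the normalized theta-sum curve equals
`(2√N)⁻¹ |csc(π α (2n-1)/2)|`, provided the three points are not collinear. -/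
theorem discrete_radius_of_curvature (α : ℝ) (N n : ℕ)
    (hα : α ∈ Set.Ioc (0:ℝ) 1) (hn : 1 ≤ n) (hnN : n + 1 ≤ N)
    (γ : ℕ → ℂ)
    (hγ : ∀ m : ℕ, γ m = (Real.sqrt N)⁻¹ •
      ∑ j ∈ Finset.range m, Complex.exp (Real.pi * Complex.I * (j : ℂ) ^ 2 * (α : ℂ)))
    (c : ℂ) (r : ℝ)
    (h₀ : dist (γ (n - 1)) c = r) (h₁ : dist (γ n) c = r) (h₂ : dist (γ (n + 1)) c = r)
    (hcol : ¬ Collinear ℝ ({γ (n - 1), γ n, γ (n + 1)} : Set ℂ)) :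
    r = (2 * Real.sqrt N)⁻¹ * |1 / Real.sin (Real.pi * α * (2 * (n : ℝ) - 1) / 2)| :=
  discrete_radius_of_curvature_general α N n hn γ hγ c r h₀ h₁ h₂ hcol
end

section
/- The map T : (0,1] → (0,1], defined on each interval B(k,ξ) by T(α) = ξ(1/α - 2k), preserves the σ-finite infinite measure μ_T with density φ_T(α) = 1/(α+1) - 1/(α-1) with respect to Lebesgue measure on (0,1]. -/
/-!
The inverse branches of `T` are `y ↦ (2(k+1) + ξ y)⁻¹` with `ξ = ±1`, `k ∈ ℕ`. On `(0,1)` they are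
injective, their images are disjoint, and they cover `(0,1]` up to countably many points. By the
change of variables formula, `μ_T (T⁻¹ A) = ∫_A ∑_{ξ,k} φ_T(t⁻¹) / t²` with `t = 2(k+1) + ξ y`, and
`φ_T(t⁻¹) / t² = 1/(t-1) - 1/(t+1)`. For fixed `ξ` the sum over `k` telescopes to `1/(1 + ξ y)`,
and `1/(1+y) + 1/(1-y) = φ_T(y)`.
-/

open MeasureTheory Set Filter Topology ENNReal Function

/-- The σ-finite infinite measure `μ_T` on `(0,1]` with density
`φ_T(α) = 1/(α+1) - 1/(α-1)` with respect to Lebesgue measure. -/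
noncomputable def muT : Measure ℝ :=
  (volume.restrict (Set.Ioc (0:ℝ) 1)).withDensity
    (fun α => ENNReal.ofReal (1 / (α + 1) - 1 / (α - 1)))

theorem hasSum_sub_succ_of_antitone {c : ℕ → ℝ} (hc : Antitone c) {l : ℝ}
    (hlim : Tendsto c atTop (𝓝 l)) : HasSum (fun n => c n - c (n + 1)) (c 0 - l) := by
  rw [hasSum_iff_tendsto_nat_of_nonneg fun n => sub_nonneg.2 (hc n.le_succ)]
  simp only [Finset.sum_range_sub']
  exact tendsto_const_nhds.sub hlim

theorem hasSum_inv_two_mul_add_sub {a : ℝ} (ha : 0 < a) :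
    HasSum (fun k : ℕ => (2 * k + a)⁻¹ - (2 * (k + 1) + a)⁻¹) a⁻¹ := by
  have hanti : Antitone fun k : ℕ => (2 * k + a)⁻¹ :=
    antitone_nat_of_succ_le fun k => by gcongr; linarith
  have hlim : Tendsto (fun k : ℕ => (2 * k + a)⁻¹) atTop (𝓝 0) := by
    refine tendsto_inv_atTop_zero.comp (tendsto_atTop_add_const_right _ _ ?_)
    exact tendsto_natCast_atTop_atTop.const_mul_atTop two_pos
  simpa using hasSum_sub_succ_of_antitone hanti hlim

theorem lintegral_iUnion_image_eq_of_tsum_eq {ι : Type*} [Countable ι] {s : Set ℝ}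
    {ψ ψ' : ι → ℝ → ℝ} {φ : ℝ → ℝ≥0∞} (hφ : Measurable φ) (hs : MeasurableSet s)
    (hψ : ∀ i, ∀ y ∈ s, HasDerivWithinAt (ψ i) (ψ' i y) s y) (hinj : ∀ i, InjOn (ψ i) s)
    (hdisj : Pairwise (Disjoint on fun i => ψ i '' s))
    (hsum : ∀ y ∈ s, ∑' i, ENNReal.ofReal |ψ' i y| * φ (ψ i y) = φ y) :
    ∫⁻ x in ⋃ i, ψ i '' s, φ x = ∫⁻ y in s, φ y := by
  have hmeas i : MeasurableSet (ψ i '' s) :=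
    measurable_image_of_fderivWithin hs (fun y hy => (hψ i y hy).hasFDerivWithinAt) (hinj i)
  have hae i :
      AEMeasurable (fun y => ENNReal.ofReal |ψ' i y| * φ (ψ i y)) (volume.restrict s) := by
    refine AEMeasurable.mul ?_ (hφ.comp_aemeasurable ?_)
    · simpa only [ContinuousLinearMap.det_toSpanSingleton] using
        aemeasurable_ofReal_abs_det_fderivWithin volume hs
          (fun y hy => (hψ i y hy).hasFDerivWithinAt)
    · exact ContinuousOn.aemeasurable (fun y hy => (hψ i y hy).continuousWithinAt) hs
  calc ∫⁻ x in ⋃ i, ψ i '' s, φ x = ∑' i, ∫⁻ x in ψ i '' s, φ x := lintegral_iUnion hmeas hdisj _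
    _ = ∑' i, ∫⁻ y in s, ENNReal.ofReal |ψ' i y| * φ (ψ i y) := by
      simp only [lintegral_image_eq_lintegral_abs_deriv_mul hs (hψ _) (hinj _)]
    _ = ∫⁻ y in s, φ y := by
      rw [← lintegral_tsum hae]
      exact setLIntegral_congr_fun hs hsum

noncomputable def densityT (α : ℝ) : ℝ≥0∞ := ENNReal.ofReal (1 / (α + 1) - 1 / (α - 1))

theorem measurable_densityT : Measurable densityT := by
  unfold densityT
  fun_prop

theorem muT_apply_of_subset {s : Set ℝ} (hs : s ⊆ Ioc 0 1) :
    muT s = ∫⁻ α in s, densityT α := by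
  rw [muT, withDensity_apply', Measure.restrict_restrict_of_subset hs]
  rfl

theorem muT_absolutelyContinuous : muT ≪ volume :=
  (withDensity_absolutelyContinuous _ _).trans Measure.restrict_le_self.absolutelyContinuous

/-- The inverse of the branch of `T` on `B(k + 1, ξ)`, for `i = (ξ, k)`. -/
noncomputable def invBranch (i : ℤˣ × ℕ) (y : ℝ) : ℝ := (2 * (i.2 + 1) + i.1 * y)⁻¹

theorem one_lt_invBranch_denom (i : ℤˣ × ℕ) {y : ℝ} (hy : y ∈ Ioo 0 1) :
    1 < (2 * (i.2 + 1) + i.1 * y : ℝ) := by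
  have : (0 : ℝ) ≤ i.2 := i.2.cast_nonneg
  rcases Int.units_eq_one_or i.1 with h | h <;> rw [h] <;> push_cast <;> linarith [hy.1, hy.2]

theorem invBranch_mem_Ioo (i : ℤˣ × ℕ) {y : ℝ} (hy : y ∈ Ioo 0 1) : invBranch i y ∈ Ioo 0 1 :=
  have h := one_lt_invBranch_denom i hy
  ⟨inv_pos.2 (zero_lt_one.trans h), inv_lt_one_of_one_lt₀ h⟩

theorem eq_of_invBranch_eq {i j : ℤˣ × ℕ} {y y' : ℝ} (hy : y ∈ Ioo 0 1) (hy' : y' ∈ Ioo 0 1)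
    (h : invBranch i y = invBranch j y') : i = j ∧ y = y' := by
  obtain ⟨ξ, k⟩ := i
  obtain ⟨ξ', k'⟩ := j
  obtain ⟨hy0, hy1⟩ := hy
  obtain ⟨hy0', hy1'⟩ := hy'
  simp only [invBranch, inv_inj] at h
  have hk : (k : ℝ) < k' + 1 ∧ (k' : ℝ) < k + 1 := by
    rcases Int.units_eq_one_or ξ with rfl | rfl <;>
      rcases Int.units_eq_one_or ξ' with rfl | rfl <;> push_cast at h <;>
      constructor <;> linarith
  obtain rfl : k = k' := by
    have h1 : k < k' + 1 := by exact_mod_cast hk.1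
    have h2 : k' < k + 1 := by exact_mod_cast hk.2
    omega
  rcases Int.units_eq_one_or ξ with rfl | rfl <;>
    rcases Int.units_eq_one_or ξ' with rfl | rfl <;> push_cast at h <;>
    first | exact ⟨rfl, by linarith⟩ | (exfalso; linarith)

theorem hasDerivAt_invBranch (i : ℤˣ × ℕ) {y : ℝ} (hy : y ∈ Ioo 0 1) :
    HasDerivAt (invBranch i) (-i.1 / (2 * (i.2 + 1) + i.1 * y : ℝ) ^ 2) y := by
  have h := ((hasDerivAt_id y).const_mul (i.1 : ℝ)).const_add (2 * (i.2 + 1) : ℝ)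
  exact (h.inv (zero_lt_one.trans (one_lt_invBranch_denom i hy)).ne').congr_deriv (by simp)

theorem inv_sq_mul_sub_inv {t : ℝ} (ht : 1 < t) :
    (t ^ 2)⁻¹ * (1 / (t⁻¹ + 1) - 1 / (t⁻¹ - 1)) = (t - 1)⁻¹ - (t + 1)⁻¹ := by
  have h1 : t - 1 ≠ 0 := by linarith
  have h2 : 1 - t ≠ 0 := by linarith
  field_simp
  ring

-- The right side is `(t - 1)⁻¹ - (t + 1)⁻¹`, shaped to telescope in `k` with `a = 1 + ξ y`.
theorem abs_deriv_invBranch_mul_densityT (ξ : ℤˣ) (k : ℕ) {y : ℝ} (hy : y ∈ Ioo 0 1) :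
    ENNReal.ofReal |-ξ / (2 * (k + 1) + ξ * y : ℝ) ^ 2| * densityT (invBranch (ξ, k) y) =
      ENNReal.ofReal ((2 * k + (1 + ξ * y) : ℝ)⁻¹ - (2 * (k + 1 : ℕ) + (1 + ξ * y) : ℝ)⁻¹) := by
  set t : ℝ := 2 * (k + 1) + ξ * y
  have ht : 1 < t := one_lt_invBranch_denom (ξ, k) hy
  have habs : |-ξ / t ^ 2| = (t ^ 2)⁻¹ := by
    rw [abs_div, abs_neg, abs_of_pos (by positivity : 0 < t ^ 2), div_eq_mul_inv]
    rcases Int.units_eq_one_or ξ with rfl | rfl <;> simp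
  rw [densityT, invBranch, habs, ← ENNReal.ofReal_mul (by positivity), inv_sq_mul_sub_inv ht]
  congr 2 <;> push_cast <;> ring

theorem tsum_abs_deriv_invBranch_mul_densityT {y : ℝ} (hy : y ∈ Ioo 0 1) :
    ∑' i : ℤˣ × ℕ, ENNReal.ofReal |-i.1 / (2 * (i.2 + 1) + i.1 * y : ℝ) ^ 2|
      * densityT (invBranch i y) = densityT y := by
  have hpos (ξ : ℤˣ) : 0 < 1 + ξ * y := by
    rcases Int.units_eq_one_or ξ with rfl | rfl <;> push_cast <;> linarith [hy.1, hy.2]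
  have hbranch (ξ : ℤˣ) : ∑' k : ℕ, ENNReal.ofReal |-ξ / (2 * (k + 1) + ξ * y : ℝ) ^ 2|
      * densityT (invBranch (ξ, k) y) = ENNReal.ofReal (1 + ξ * y)⁻¹ := by
    have h := hasSum_inv_two_mul_add_sub (hpos ξ)
    simp only [abs_deriv_invBranch_mul_densityT ξ _ hy]
    push_cast
    rw [← ENNReal.ofReal_tsum_of_nonneg (fun k => sub_nonneg.2 ?_) h.summable, h.tsum_eq]
    gcongr <;> linarith [hpos ξ]
  rw [ENNReal.tsum_prod', tsum_fintype]
  simp only [hbranch]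
  rw [UnitsInt.univ, Finset.sum_pair (units_ne_neg_self 1),
    ← ENNReal.ofReal_add (inv_nonneg.2 (hpos _).le) (inv_nonneg.2 (hpos _).le), densityT]
  congr 1
  simp only [Units.val_one, Units.val_neg, Int.cast_one, Int.cast_neg, one_mul, neg_one_mul,
    ← sub_eq_add_neg, one_div, add_comm y, ← neg_sub 1 y, inv_neg, sub_neg_eq_add]

theorem muT_iUnion_image_invBranch {s : Set ℝ} (hs : MeasurableSet s) (hs' : s ⊆ Ioo 0 1) :
    muT (⋃ i, invBranch i '' s) = muT s := by
  have hU : ⋃ i, invBranch i '' s ⊆ Ioc 0 1 :=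
    iUnion_subset fun i => image_subset_iff.2 fun y hy =>
      Ioo_subset_Ioc_self (invBranch_mem_Ioo i (hs' hy))
  rw [muT_apply_of_subset hU, muT_apply_of_subset (hs'.trans Ioo_subset_Ioc_self)]
  refine lintegral_iUnion_image_eq_of_tsum_eq measurable_densityT hs
    (fun i y hy => (hasDerivAt_invBranch i (hs' hy)).hasDerivWithinAt)
    (fun i y hy y' hy' h => (eq_of_invBranch_eq (hs' hy) (hs' hy') h).2)
    (fun i j hij => disjoint_left.2 ?_)
    (fun y hy => tsum_abs_deriv_invBranch_mul_densityT (hs' hy))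
  rintro _ ⟨y, hy, rfl⟩ ⟨y', hy', h⟩
  exact hij (eq_of_invBranch_eq (hs' hy') (hs' hy) h).1.symm

def IsEvenGaussMap (T : ℝ → ℝ) : Prop :=
  (∀ k : ℕ, 1 ≤ k → ∀ α ∈ Ioc (1 / (2 * (k : ℝ))) (1 / (2 * (k : ℝ) - 1)), T α = 2 * k - 1 / α) ∧
  (∀ k : ℕ, 1 ≤ k → ∀ α ∈ Ioc (1 / (2 * (k : ℝ) + 1)) (1 / (2 * (k : ℝ))), T α = 1 / α - 2 * k)

theorem IsEvenGaussMap.apply_invBranch {T : ℝ → ℝ} (hT : IsEvenGaussMap T) (i : ℤˣ × ℕ)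
    {y : ℝ} (hy : y ∈ Ioo 0 1) : T (invBranch i y) = y := by
  obtain ⟨ξ, k⟩ := i
  obtain ⟨hy0, hy1⟩ := hy
  have hk : (0 : ℝ) ≤ k := k.cast_nonneg
  rcases Int.units_eq_one_or ξ with rfl | rfl
  · have h := hT.2 (k + 1) (by omega) (invBranch (1, k) y)
    simp only [invBranch, Units.val_one, Int.cast_one, one_mul, one_div, inv_inv, Nat.cast_add,
      Nat.cast_one, mem_Ioc] at h ⊢
    rw [h ⟨by gcongr, by gcongr; linarith⟩]
    ring
  · have h := hT.1 (k + 1) (by omega) (invBranch (-1, k) y)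
    simp only [invBranch, Units.val_neg, Units.val_one, Int.cast_neg, Int.cast_one, neg_one_mul,
      ← sub_eq_add_neg, one_div, inv_inv, Nat.cast_add, Nat.cast_one, mem_Ioc] at h ⊢
    rw [h ⟨by gcongr <;> linarith, by gcongr; linarith⟩]
    ring

theorem mem_Ioc_inv_floor {α : ℝ} (hα : α ∈ Ioc 0 1) :
    α ∈ Ioc ((⌊α⁻¹⌋₊ + 1 : ℝ)⁻¹) (⌊α⁻¹⌋₊ : ℝ)⁻¹ := by
  have hx : 1 ≤ α⁻¹ := one_le_inv_iff₀.2 hα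
  have hm : (1 : ℝ) ≤ ⌊α⁻¹⌋₊ := by exact_mod_cast Nat.le_floor (by exact_mod_cast hx)
  constructor
  · simpa using inv_strictAnti₀ (by positivity) (Nat.lt_floor_add_one α⁻¹)
  · simpa using inv_anti₀ (by positivity) (Nat.floor_le (by positivity) : (⌊α⁻¹⌋₊ : ℝ) ≤ α⁻¹)

theorem IsEvenGaussMap.exists_invBranch_apply_eq {T : ℝ → ℝ} (hT : IsEvenGaussMap T) {α : ℝ}
    (hα : α ∈ Ioc 0 1) : ∃ i, invBranch i (T α) = α := by
  have hm : 1 ≤ ⌊α⁻¹⌋₊ := Nat.le_floor (by simpa using one_le_inv_iff₀.2 hα)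
  have hmem := mem_Ioc_inv_floor hα
  rcases Nat.even_or_odd' ⌊α⁻¹⌋₊ with ⟨j, hj | hj⟩
  · obtain ⟨k, rfl⟩ : ∃ k, j = k + 1 := ⟨j - 1, by omega⟩
    refine ⟨(1, k), ?_⟩
    rw [hj] at hmem
    push_cast at hmem
    rw [hT.2 (k + 1) (by omega) α (by simpa [one_div] using hmem)]
    simp [invBranch]
  · refine ⟨(-1, j), ?_⟩
    rw [hj] at hmem
    push_cast at hmem
    have hcast : 2 * ((j + 1 : ℕ) : ℝ) = 2 * j + 1 + 1 := by push_cast; ring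
    rw [hT.1 (j + 1) (by omega) α (by rw [hcast]; simpa [one_div] using hmem)]
    simp [invBranch]

theorem IsEvenGaussMap.iUnion_image_invBranch_subset {T : ℝ → ℝ} (hT : IsEvenGaussMap T)
    {s : Set ℝ} (hs : s ⊆ Ioo 0 1) : ⋃ i, invBranch i '' s ⊆ T ⁻¹' s ∩ Ioc 0 1 := by
  simp only [iUnion_subset_iff, image_subset_iff]
  intro i y hy
  exact ⟨by simpa [hT.apply_invBranch i (hs hy)] using hy,
    Ioo_subset_Ioc_self (invBranch_mem_Ioo i (hs hy))⟩

theorem IsEvenGaussMap.preimage_sdiff_subset_iUnion_image {T : ℝ → ℝ} (hT : IsEvenGaussMap T)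
    {A : Set ℝ} :
    (T ⁻¹' A ∩ Ioc 0 1) \ range (fun i => invBranch i 1) ⊆ ⋃ i, invBranch i '' (A \ {1}) := by
  rintro α ⟨⟨hTα, hα⟩, hα1⟩
  obtain ⟨i, hi⟩ := hT.exists_invBranch_apply_eq hα
  refine mem_iUnion.2 ⟨i, T α, ⟨hTα, fun h => hα1 ⟨i, ?_⟩⟩, hi⟩
  rwa [← h]

/-- The even-continued-fraction Gauss map `T`, defined by `T(α) = ξ(1/α - 2k)` on each
branch `B(k,ξ)`, preserves the measure `μ_T`. -/
theorem T_preserves_muT (T : ℝ → ℝ)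
    (hT1 : ∀ k : ℕ, 1 ≤ k → ∀ α ∈ Set.Ioc (1 / (2 * (k:ℝ))) (1 / (2 * (k:ℝ) - 1)),
      T α = 2 * (k:ℝ) - 1 / α)
    (hT2 : ∀ k : ℕ, 1 ≤ k → ∀ α ∈ Set.Ioc (1 / (2 * (k:ℝ) + 1)) (1 / (2 * (k:ℝ))),
      T α = 1 / α - 2 * (k:ℝ)) :
    ∀ A : Set ℝ, MeasurableSet A → A ⊆ Set.Ioc 0 1 →
      muT (T ⁻¹' A ∩ Set.Ioc 0 1) = muT A := by
  intro A hA hAsub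
  have hT : IsEvenGaussMap T := ⟨hT1, hT2⟩
  have hA' : A \ {1} ⊆ Ioo 0 1 := fun y hy => ⟨(hAsub hy.1).1, (hAsub hy.1).2.lt_of_ne hy.2⟩
  have hnull : muT (range fun i => invBranch i 1) = 0 :=
    muT_absolutelyContinuous ((countable_range _).measure_zero volume)
  calc muT (T ⁻¹' A ∩ Ioc 0 1)
      = muT (⋃ i, invBranch i '' (A \ {1})) := by
        refine le_antisymm ?_ (measure_mono ?_)
        · exact measure_sdiff_null hnull ▸ measure_mono hT.preimage_sdiff_subset_iUnion_image
        · exact (hT.iUnion_image_invBranch_subset hA').trans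
            (inter_subset_inter_left _ (preimage_mono sdiff_subset))
    _ = muT (A \ {1}) := muT_iUnion_image_invBranch (hA.diff (measurableSet_singleton 1)) hA'
    _ = muT A := measure_sdiff_null (muT_absolutelyContinuous (measure_singleton 1))
end

section
/- For every α ∈ (0,1] and every n ∈ ℕ, the n-th R-denominator satisfies q̂_n(α) ≥ 3^{n/3}. -/
lemma aux_cube_to_rpow (x : ℝ) (n : ℕ) (hx0 : 0 ≤ x) (hx3 : (3:ℝ) ^ n ≤ x ^ 3) :
    (3:ℝ) ^ ((n : ℝ) / 3) ≤ x := by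
  have hx3' : (3:ℝ) ^ (n:ℝ) ≤ x ^ ((3:ℕ):ℝ) := by
    rw [Real.rpow_natCast, Real.rpow_natCast]
    exact hx3
  have h1 : (3:ℝ) ^ ((n:ℝ) / 3) = ((3:ℝ) ^ (n:ℝ)) ^ ((3:ℝ)⁻¹) := by
    rw [← Real.rpow_mul (by norm_num : (0:ℝ) ≤ 3)]
    ring_nf
  have h2 : ((x : ℝ) ^ (((3:ℕ)):ℝ)) ^ ((3:ℝ)⁻¹) = x := by
    rw [← Real.rpow_mul hx0]
    norm_num
  calc (3:ℝ) ^ ((n:ℝ) / 3) = ((3:ℝ) ^ (n:ℝ)) ^ ((3:ℝ)⁻¹) := h1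
    _ ≤ (x ^ ((3:ℕ):ℝ)) ^ ((3:ℝ)⁻¹) :=
        Real.rpow_le_rpow (Real.rpow_nonneg (by norm_num) _) hx3' (by norm_num)
    _ = x := h2



/-- The `R`-denominators `q̂_n = q_{ν_n}` of the even continued fraction expansion satisfy
`q̂_n ≥ 3^{n/3}`.  Here `ν_n = h_1 + ⋯ + h_n + n + 1`, the ECF entries `(k_i, ξ_i)` have
the Σ-block structure (each block is `h_j` copies of `(1,−1)` followed by an entry
`≠ (1,−1)`), and `q` is indexed with a shift: `q 0 = q_{-1} = 0`, `q 1 = q_0 = 1`. -/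
theorem Rdenominator_growth (h : ℕ → ℕ) (k ξ : ℕ → ℤ) (q : ℕ → ℤ) (ν : ℕ → ℕ)
    (hν : ∀ n, ν n = (∑ j ∈ Finset.range n, h (j + 1)) + n + 1)
    (hk : ∀ i, 1 ≤ k i) (hξ0 : ξ 0 = 1) (hξ : ∀ i, ξ i = 1 ∨ ξ i = -1)
    (hq0 : q 0 = 0) (hq1 : q 1 = 1)
    (hqrec : ∀ i, q (i + 2) = 2 * k (i + 1) * q (i + 1) + ξ i * q i)
    (hblock : ∀ j, 1 ≤ j →
      (∀ i, ν (j - 1) ≤ i → i ≤ ν j - 2 → k i = 1 ∧ ξ i = -1) ∧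
      ¬ (k (ν j - 1) = 1 ∧ ξ (ν j - 1) = -1)) :
    ∀ n : ℕ, (3:ℝ) ^ ((n : ℝ) / 3) ≤ (q (ν n + 1) : ℝ) := by
  -- q is nonnegative and strictly increasing
  have hstep : ∀ i, 0 ≤ q i ∧ q i + 1 ≤ q (i + 1) := by
    intro i
    induction i with
    | zero => simp [hq0, hq1]
    | succ n ih =>
      obtain ⟨h0, h1⟩ := ih
      refine ⟨by linarith, ?_⟩
      rw [hqrec n]
      have hk1 := hk (n + 1)
      rcases hξ n with hx | hx <;> rw [hx] <;> nlinarith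
  have hpos : ∀ i, 0 ≤ q i := fun i => (hstep i).1
  have hmono : Monotone q := monotone_nat_of_le_succ (fun i => by linarith [(hstep i).2])
  have hνsucc : ∀ j, ν (j + 1) = ν j + h (j + 1) + 1 := by
    intro j
    rw [hν, hν, Finset.sum_range_succ]
    omega
  have hν1 : ∀ j, 1 ≤ ν j := by intro j; rw [hν]; omega
  -- key growth lemma
  have key : ∀ j, 5 * q (ν j + 1) ≤ 3 * q (ν (j + 1) + 1) := by
    intro j
    have hb := hblock (j + 1) (by omega)
    have hbb : ν (j + 1) = ν j + h (j + 1) + 1 := hνsucc j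
    rcases Nat.eq_zero_or_pos (h (j + 1)) with h0 | h1
    · -- h = 0 block
      have hb1 : ν (j + 1) = ν j + 1 := by omega
      have hexc : ¬ (k (ν j) = 1 ∧ ξ (ν j) = -1) := by
        have h2 := hb.2
        rw [show ν (j + 1) - 1 = ν j by omega] at h2
        exact h2
      rw [hb1]
      have hr := hqrec (ν j)
      have hka1 := hk (ν j + 1)
      have hp0 := hpos (ν j)
      have hp1 := hpos (ν j + 1)
      rcases hξ (ν j) with hx | hx
      · rw [hx] at hr; nlinarith
      · have hka : 2 ≤ k (ν j) := by
          have : k (ν j) ≠ 1 := fun hh => hexc ⟨hh, hx⟩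
          have := hk (ν j); omega
        obtain ⟨a, ha⟩ : ∃ a, ν j = a + 1 := ⟨ν j - 1, by have := hν1 j; omega⟩
        have hr2 := hqrec a
        rw [← ha] at hr2  -- fix indices below
        -- q (ν j + 1) = 2 * k (ν j) * q (ν j) + ξ a * q a
        have hxa : ξ a * q a ≥ -q a := by
          rcases hξ a with hy | hy <;> rw [hy] <;> nlinarith [hpos a]
        have hqa : q a ≤ q (ν j) := hmono (by omega)
        have hlow : 3 * q (ν j) ≤ q (ν j + 1) := by
          have : q (a + 2) = 2 * k (a + 1) * q (a + 1) + ξ a * q a := hqrec a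
          rw [show a + 2 = ν j + 1 by omega, show a + 1 = ν j by omega] at this
          nlinarith [hpos a]
        rw [hx] at hr
        nlinarith
    · -- h ≥ 1 block
      obtain ⟨m, hm⟩ : ∃ m, h (j + 1) = m + 1 := ⟨h (j + 1) - 1, by omega⟩
      set a := ν j with haa
      have hb2 : ν (j + 1) = a + m + 2 := by omega
      have hbl := hb.1
      simp only [Nat.add_sub_cancel] at hbl
      have hin := hbl (a + m) (by omega) (by omega)
      have hexc : ¬ (k (a + m + 1) = 1 ∧ ξ (a + m + 1) = -1) := by
        have h2 := hb.2
        rw [show ν (j + 1) - 1 = a + m + 1 by omega] at h2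
        exact h2
      rw [hb2]
      have hr1 := hqrec (a + m)
      have hr2 := hqrec (a + m + 1)
      rw [hin.2] at hr1
      have hk1 := hk (a + m + 1)
      have hk2 := hk (a + m + 2)
      have hm1 : q (a + 1) ≤ q (a + m + 1) := hmono (by omega)
      have hm2 : q (a + m) ≤ q (a + m + 1) := hmono (by omega)
      have hm3 : q (a + m + 1) ≤ q (a + m + 2) := hmono (by omega)
      have hp1 := hpos (a + m)
      have hp2 := hpos (a + m + 1)
      have hp3 := hpos (a + m + 2)
      rcases hξ (a + m + 1) with hx | hx
      · rw [hx] at hr2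
        -- q(a+m+3) = 2 k q(a+m+2) + q(a+m+1) ≥ 3 q(a+m+1) ≥ 3 q(a+1)
        nlinarith
      · have hka : 2 ≤ k (a + m + 1) := by
          have : k (a + m + 1) ≠ 1 := fun hh => hexc ⟨hh, hx⟩
          omega
        rw [hx] at hr2
        -- q(a+m+2) ≥ 4 q(a+m+1) - q(a+m) ≥ 3 q(a+m+1)
        have h4 : 3 * q (a + m + 1) ≤ q (a + m + 2) := by nlinarith
        nlinarith
  -- integer cube bound
  have cube : ∀ n, (3:ℤ) ^ n ≤ (q (ν n + 1)) ^ 3 := by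
    intro n
    induction n with
    | zero =>
      have h1 : (1:ℤ) ≤ q (ν 0 + 1) := by
        have := hmono (show 1 ≤ ν 0 + 1 by omega)
        rw [hq1] at this; linarith
      calc (3:ℤ)^0 = 1^3 := by norm_num
        _ ≤ (q (ν 0 + 1))^3 := pow_le_pow_left₀ (by norm_num) h1 3
    | succ n ih =>
      have hkey := key n
      have hx := hpos (ν n + 1)
      have h5 : (5 * q (ν n + 1)) ^ 3 ≤ (3 * q (ν (n + 1) + 1)) ^ 3 :=
        pow_le_pow_left₀ (by linarith) hkey 3
      have h6 : 125 * (q (ν n + 1))^3 ≤ 27 * (q (ν (n + 1) + 1))^3 := by nlinarith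
      have h7 : (3:ℤ)^(n+1) = 3 * 3^n := by ring
      have h8 : (0:ℤ) < 3^n := by positivity
      nlinarith
  -- pass to the reals
  intro n
  have hx0 : (0:ℝ) ≤ ((q (ν n + 1) : ℤ) : ℝ) := by exact_mod_cast hpos (ν n + 1)
  have hx3 : (3:ℝ) ^ n ≤ ((q (ν n + 1) : ℤ) : ℝ) ^ 3 := by exact_mod_cast cube n
  exact aux_cube_to_rpow _ n hx0 hx3
end

section
/- Let Π be a stochastic matrix on a finite state space with all entries strictly positive, and let π be any probability vector. Then the sequence Πⁿπ converges as n → ∞ (to the unique stationary distribution of Π). -/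
/-!
Since every entry of `P` is at least `δ > 0`, the matrix `P - δ J` (with `J` the all-ones matrix)
is nonnegative with column sums `1 - mδ < 1`, and it agrees with `P` on vectors of sum zero. So `P`
contracts the ℓ¹ norm of such vectors by the factor `c = 1 - mδ`. The differences
`Pⁿ⁺¹π - Pⁿπ = Pⁿ(Pπ - π)` therefore decay geometrically, `Pⁿπ` is Cauchy, its limit is a fixed
point in the (closed, invariant) simplex, and two fixed points of equal mass differ by a zero-sum
fixed vector, which the contraction forces to vanish.
-/

open Matrix Filter Topology Finset

theorem pi_norm_le_sum_abs {ι : Type*} [Fintype ι] (v : ι → ℝ) : ‖v‖ ≤ ∑ i, |v i| :=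
  (pi_norm_le_iff_of_nonneg (sum_nonneg fun _ _ => abs_nonneg _)).2 fun i =>
    (Real.norm_eq_abs _).trans_le (single_le_sum (fun j _ => abs_nonneg (v j)) (mem_univ i))

namespace Matrix

variable {ι : Type*} [Fintype ι] {M : Matrix ι ι ℝ} {c : ℝ}

def ZeroSumContraction (M : Matrix ι ι ℝ) (c : ℝ) : Prop :=
  ∀ v : ι → ℝ, ∑ i, v i = 0 → ∑ i, |(M *ᵥ v) i| ≤ c * ∑ i, |v i|

theorem zeroSumContraction_of_le_entries (hcol : ∀ j, ∑ i, M i j = 1)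
    {δ : ℝ} (hδ : ∀ i j, δ ≤ M i j) : ZeroSumContraction M (1 - Fintype.card ι * δ) := by
  intro v hv
  have hshift : ∀ i, (M *ᵥ v) i = ∑ j, (M i j - δ) * v j := by
    intro i
    simp only [mulVec, dotProduct, sub_mul, sum_sub_distrib, ← mul_sum, hv, mul_zero, sub_zero]
  calc ∑ i, |(M *ᵥ v) i| = ∑ i, |∑ j, (M i j - δ) * v j| := by simp only [hshift]
    _ ≤ ∑ i, ∑ j, (M i j - δ) * |v j| := by
        refine sum_le_sum fun i _ => (abs_sum_le_sum_abs _ _).trans_eq ?_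
        refine sum_congr rfl fun j _ => ?_
        rw [abs_mul, abs_of_nonneg (sub_nonneg.2 (hδ i j))]
    _ = ∑ j, (∑ i, (M i j - δ)) * |v j| := by
        rw [sum_comm]
        simp only [sum_mul]
    _ = (1 - Fintype.card ι * δ) * ∑ j, |v j| := by
        simp only [sum_sub_distrib, hcol, sum_const, card_univ, nsmul_eq_mul, mul_sum]

theorem exists_zeroSumContraction (hcol : ∀ j, ∑ i, M i j = 1)
    (hpos : ∀ i j, 0 < M i j) : ∃ c, 0 ≤ c ∧ c < 1 ∧ ZeroSumContraction M c := by
  cases isEmpty_or_nonempty ι with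
  | inl _ => exact ⟨0, le_rfl, zero_lt_one, fun v _ => by simp⟩
  | inr hne =>
    obtain ⟨⟨i₀, j₀⟩, hmin⟩ := Finite.exists_min fun p : ι × ι => M p.1 p.2
    have hδ : ∀ i j, M i₀ j₀ ≤ M i j := fun i j => hmin (i, j)
    refine ⟨_, ?_, ?_, zeroSumContraction_of_le_entries hcol hδ⟩
    · have : Fintype.card ι * M i₀ j₀ ≤ 1 := by
        calc Fintype.card ι * M i₀ j₀ = ∑ i, M i₀ j₀ := by simp
          _ ≤ ∑ i, M i j₀ := sum_le_sum fun i _ => hδ i j₀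
          _ = 1 := hcol j₀
      linarith
    · have := mul_pos (Nat.cast_pos.2 (Fintype.card_pos (α := ι))) (hpos i₀ j₀)
      linarith

theorem ZeroSumContraction.eq_of_mulVec_eq_self (h : ZeroSumContraction M c) (hc : c < 1)
    {x y : ι → ℝ} (hx : M *ᵥ x = x) (hy : M *ᵥ y = y) (hsum : ∑ i, x i = ∑ i, y i) : x = y := by
  have hfix : M *ᵥ (x - y) = x - y := by rw [mulVec_sub, hx, hy]
  have hle := h (x - y) (by simp only [Pi.sub_apply, sum_sub_distrib, hsum, sub_self])
  rw [hfix] at hle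
  have hzero : ∑ i, |(x - y) i| = 0 :=
    le_antisymm (by nlinarith [sum_nonneg fun i (_ : i ∈ univ) => abs_nonneg ((x - y) i)])
      (sum_nonneg fun _ _ => abs_nonneg _)
  ext i
  simpa [sub_eq_zero] using (sum_eq_zero_iff_of_nonneg fun _ _ => abs_nonneg _).1 hzero i
    (mem_univ i)

variable [DecidableEq ι]

theorem mulVec_mem_stdSimplex (hM : M ∈ colStochastic ℝ ι) {x : ι → ℝ}
    (hx : x ∈ stdSimplex ℝ ι) : M *ᵥ x ∈ stdSimplex ℝ ι :=
  ⟨nonneg_mulVec_of_mem_colStochastic hM hx.1, (sum_mulVec_of_mem_colStochastic hM).trans hx.2⟩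

theorem ZeroSumContraction.pow (h : ZeroSumContraction M c) (hc : 0 ≤ c)
    (hM : M ∈ colStochastic ℝ ι) (n : ℕ) : ZeroSumContraction (M ^ n) (c ^ n) := by
  intro v hv
  induction n with
  | zero => simp
  | succ n ih =>
    have hsum : ∑ i, ((M ^ n) *ᵥ v) i = 0 :=
      (sum_mulVec_of_mem_colStochastic (pow_mem hM n)).trans hv
    calc ∑ i, |((M ^ (n + 1)) *ᵥ v) i| = ∑ i, |(M *ᵥ (M ^ n) *ᵥ v) i| := by
          rw [pow_succ', mulVec_mulVec]
      _ ≤ c * ∑ i, |((M ^ n) *ᵥ v) i| := h _ hsum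
      _ ≤ c * (c ^ n * ∑ i, |v i|) := mul_le_mul_of_nonneg_left ih hc
      _ = c ^ (n + 1) * ∑ i, |v i| := by ring

theorem ZeroSumContraction.exists_tendsto_pow_mulVec (h : ZeroSumContraction M c) (hc₀ : 0 ≤ c)
    (hc₁ : c < 1) (hM : M ∈ colStochastic ℝ ι) (x : ι → ℝ) :
    ∃ y, Tendsto (fun n => (M ^ n) *ᵥ x) atTop (𝓝 y) := by
  have hsum : ∑ i, (x - M *ᵥ x) i = 0 := by
    simp only [Pi.sub_apply, sum_sub_distrib, sum_mulVec_of_mem_colStochastic hM, sub_self]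
  refine cauchySeq_tendsto_of_complete <| cauchySeq_of_le_geometric c (∑ i, |(x - M *ᵥ x) i|) hc₁
    fun n => ?_
  calc dist ((M ^ n) *ᵥ x) ((M ^ (n + 1)) *ᵥ x) = ‖(M ^ n) *ᵥ (x - M *ᵥ x)‖ := by
        rw [dist_eq_norm, mulVec_sub, pow_succ, ← mulVec_mulVec]
    _ ≤ ∑ i, |((M ^ n) *ᵥ (x - M *ᵥ x)) i| := pi_norm_le_sum_abs _
    _ ≤ c ^ n * ∑ i, |(x - M *ᵥ x) i| := h.pow hc₀ hM n _ hsum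
    _ = _ := mul_comm _ _

theorem mulVec_eq_self_of_tendsto_pow_mulVec {x y : ι → ℝ}
    (h : Tendsto (fun n => (M ^ n) *ᵥ x) atTop (𝓝 y)) : M *ᵥ y = y := by
  have hshift : Tendsto (fun n => M *ᵥ (M ^ n) *ᵥ x) atTop (𝓝 y) := by
    simpa only [Function.comp_def, mulVec_mulVec, ← pow_succ'] using
      h.comp (tendsto_add_atTop_nat 1)
  exact tendsto_nhds_unique ((continuous_const.matrix_mulVec continuous_id).tendsto y |>.comp h)
    hshift

end Matrix

theorem positive_stochastic_matrix_convergence_general (m : ℕ)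
    (P : Matrix (Fin m) (Fin m) ℝ)
    (hpos : ∀ i j, 0 < P i j) (hstoch : ∀ j, ∑ i, P i j = 1)
    (π₀ : Fin m → ℝ) (hπ₀ : ∀ i, 0 ≤ π₀ i) (hsum : ∑ i, π₀ i = 1) :
    ∃ πinf : Fin m → ℝ, (∀ i, 0 ≤ πinf i) ∧ (∑ i, πinf i = 1) ∧
      P.mulVec πinf = πinf ∧
      Tendsto (fun n : ℕ => (P ^ n).mulVec π₀) atTop (nhds πinf) ∧
      ∀ ρ : Fin m → ℝ, (∀ i, 0 ≤ ρ i) → (∑ i, ρ i = 1) → P.mulVec ρ = ρ → ρ = πinf := by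
  have hP : P ∈ colStochastic ℝ (Fin m) :=
    mem_colStochastic_iff_sum.2 ⟨fun i j => (hpos i j).le, hstoch⟩
  obtain ⟨c, hc₀, hc₁, hc⟩ := exists_zeroSumContraction hstoch hpos
  obtain ⟨πinf, hlim⟩ := hc.exists_tendsto_pow_mulVec hc₀ hc₁ hP π₀
  have hsimplex : πinf ∈ stdSimplex ℝ (Fin m) :=
    (isClosed_stdSimplex ℝ (Fin m)).mem_of_tendsto hlim <| Eventually.of_forall fun n =>
      mulVec_mem_stdSimplex (pow_mem hP n) ⟨hπ₀, hsum⟩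
  have hfix : P *ᵥ πinf = πinf := mulVec_eq_self_of_tendsto_pow_mulVec hlim
  refine ⟨πinf, hsimplex.1, hsimplex.2, hfix, hlim, fun ρ _ hρsum hρ => ?_⟩
  exact hc.eq_of_mulVec_eq_self hc₁ hρ hfix (hρsum.trans hsimplex.2.symm)

/-- A stochastic matrix with strictly positive entries: `Πⁿπ` converges to the unique
stationary probability vector. -/
theorem positive_stochastic_matrix_convergence (m : ℕ) (hm : 0 < m)
    (P : Matrix (Fin m) (Fin m) ℝ)
    (hpos : ∀ i j, 0 < P i j) (hstoch : ∀ j, ∑ i, P i j = 1)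
    (π₀ : Fin m → ℝ) (hπ₀ : ∀ i, 0 ≤ π₀ i) (hsum : ∑ i, π₀ i = 1) :
    ∃ πinf : Fin m → ℝ, (∀ i, 0 ≤ πinf i) ∧ (∑ i, πinf i = 1) ∧
      P.mulVec πinf = πinf ∧
      Tendsto (fun n : ℕ => (P ^ n).mulVec π₀) atTop (nhds πinf) ∧
      ∀ ρ : Fin m → ℝ, (∀ i, 0 ≤ ρ i) → (∑ i, ρ i = 1) → P.mulVec ρ = ρ → ρ = πinf :=
  positive_stochastic_matrix_convergence_general m P hpos hstoch π₀ hπ₀ hsum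
end
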